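/- In the potential outcome setting, suppose that Var(Y₁|X) is measurable with respect to σ(β₁ᵀX) and define p(β₁ᵀX) := E[p(X) | β₁ᵀX]. If c < p(X) < 1 − c almost surely, then E[ Var(Y₁|X) / p(β₁ᵀX) ] ≤ E[ Var(Y₁|X) / p(X) ]. -/

import Mathlib

open MeasureTheory

/-- If `Var(Y₁|X)` is `σ(β₁ᵀX)`-measurable and `p(β₁ᵀX) = E[p(X) | β₁ᵀX]`, then
`E[Var(Y₁|X)/p(β₁ᵀX)] ≤ E[Var(Y₁|X)/p(X)]`. -/
theorem dimension_reduced_ipw_variance_le {Ω : Type*} (mX mβ : MeasurableSpace Ω) {mΩ : MeasurableSpace Ω}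
    {P : Measure Ω} [IsProbabilityMeasure P]
    (hmX : mX ≤ mΩ) (hmβ : mβ ≤ mX)
    (D Y₁ : Ω → ℝ) (hDm : Measurable D) (hY₁m : Measurable Y₁)
    (c : ℝ) (hc : 0 < c) (hc' : c < 1 / 2)
    (p : Ω → ℝ) (hp : p =ᵐ[P] P[D | mX])
    (hpb : ∀ᵐ ω ∂P, c < p ω ∧ p ω < 1 - c)
    (m1f : Ω → ℝ) (hm1f : m1f =ᵐ[P] P[Y₁ | mX])
    (V₁ : Ω → ℝ) (hV₁ : V₁ =ᵐ[P] P[fun ω => (Y₁ ω - m1f ω) ^ 2 | mX])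
    (hV₁meas : AEStronglyMeasurable[mβ] V₁ P) (hV₁int : Integrable V₁ P)
    (pβ : Ω → ℝ) (hpβ : pβ =ᵐ[P] P[p | mβ]) :
    (∫ ω, V₁ ω / pβ ω ∂P) ≤ ∫ ω, V₁ ω / p ω ∂P := by
  have hmβΩ : mβ ≤ mΩ := hmβ.trans hmX
  -- integrability of p and pβ
  have hpint : Integrable p P := integrable_condExp.congr hp.symm
  have hpβint : Integrable pβ P := integrable_condExp.congr hpβ.symm
  -- bounds on pβ
  have hpβlb : ∀ᵐ ω ∂P, c ≤ pβ ω := by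
    have h := condExp_mono (m := mβ) (μ := P) (integrable_const c) hpint
      (hpb.mono fun ω h => h.1.le)
    rw [condExp_const hmβΩ] at h
    filter_upwards [h, hpβ] with ω h h'
    rw [h']; exact h
  have hpβub : ∀ᵐ ω ∂P, pβ ω ≤ 1 - c := by
    have h := condExp_mono (m := mβ) (μ := P) hpint (integrable_const (1 - c))
      (hpb.mono fun ω h => h.2.le)
    rw [condExp_const hmβΩ] at h
    filter_upwards [h, hpβ] with ω h h'
    rw [h']; exact h
  -- nonnegativity of V₁
  have hV₁0 : ∀ᵐ ω ∂P, 0 ≤ V₁ ω := by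
    have h := condExp_nonneg (μ := P) (m := mX) (f := fun ω => (Y₁ ω - m1f ω) ^ 2)
      (ae_of_all _ fun ω => sq_nonneg _)
    filter_upwards [h, hV₁] with ω h h'
    rw [h']; exact h
  -- measurability of V₁ / pβ² w.r.t. mβ
  have hpβsm : AEStronglyMeasurable[mβ] pβ P :=
    (stronglyMeasurable_condExp.aestronglyMeasurable (μ := P)).congr hpβ.symm
  have hhm : AEStronglyMeasurable[mβ] (fun ω => V₁ ω / pβ ω ^ 2) P := by
    refine AEStronglyMeasurable.congr (f := fun ω => hV₁meas.mk V₁ ω / (hpβsm.mk pβ ω) ^ 2) ?_ ?_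
    · have hm : Measurable[mβ] fun ω => hV₁meas.mk V₁ ω / (hpβsm.mk pβ ω) ^ 2 :=
        (hV₁meas.stronglyMeasurable_mk.measurable).div
          ((hpβsm.stronglyMeasurable_mk.measurable).pow_const 2)
      exact hm.stronglyMeasurable.aestronglyMeasurable
    · filter_upwards [hV₁meas.ae_eq_mk, hpβsm.ae_eq_mk] with ω h1 h2
      simp only [← h1, ← h2]
  -- ae strongly measurable versions (w.r.t. mΩ)
  have hVam : AEStronglyMeasurable[mΩ] V₁ P := hV₁int.1
  have hpam : AEStronglyMeasurable[mΩ] p P := hpint.1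
  have hpβam : AEStronglyMeasurable[mΩ] pβ P := hpβint.1
  have hham : AEStronglyMeasurable[mΩ] (fun ω => V₁ ω / pβ ω ^ 2) P :=
    (hVam.aemeasurable.div ((hpβam.aemeasurable).pow_const 2)).aestronglyMeasurable
  have hgam : AEStronglyMeasurable[mΩ] (fun ω => 2 * pβ ω - p ω) P :=
    (aestronglyMeasurable_const.mul hpβam).sub hpam
  -- integrability of the product
  have hhg : Integrable (fun ω => V₁ ω / pβ ω ^ 2 * (2 * pβ ω - p ω)) P := by
    refine Integrable.mono' (hV₁int.norm.mul_const (3 / c ^ 2)) (hham.mul hgam) ?_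
    filter_upwards [hpb, hpβlb, hpβub] with ω hpω h1 h2
    obtain ⟨hp1, hp2⟩ := hpω
    have hpβ2 : c ^ 2 ≤ (pβ ω) ^ 2 := by nlinarith
    have habs : |2 * pβ ω - p ω| ≤ 3 := by
      rw [abs_le]; constructor <;> nlinarith
    have heq : ‖V₁ ω / pβ ω ^ 2 * (2 * pβ ω - p ω)‖
        = |V₁ ω| / (pβ ω) ^ 2 * |2 * pβ ω - p ω| := by
      rw [Real.norm_eq_abs, abs_mul, abs_div, abs_of_nonneg (sq_nonneg (pβ ω))]
    rw [heq]
    have h3 : |V₁ ω| / (pβ ω) ^ 2 ≤ |V₁ ω| / c ^ 2 :=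
      div_le_div_of_nonneg_left (abs_nonneg _) (by positivity) hpβ2
    calc |V₁ ω| / (pβ ω) ^ 2 * |2 * pβ ω - p ω| ≤ |V₁ ω| / c ^ 2 * 3 :=
          mul_le_mul h3 habs (abs_nonneg _) (by positivity)
      _ = ‖V₁ ω‖ * (3 / c ^ 2) := by rw [Real.norm_eq_abs]; ring
  -- integrability of V₁ / pβ and V₁ / p
  have hVpβ : Integrable (fun ω => V₁ ω / pβ ω) P := by
    refine Integrable.mono' (hV₁int.norm.mul_const c⁻¹)
      ((hVam.aemeasurable.div hpβam.aemeasurable).aestronglyMeasurable) ?_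
    filter_upwards [hpβlb] with ω h1
    rw [Real.norm_eq_abs, abs_div, abs_of_pos (lt_of_lt_of_le hc h1), div_eq_mul_inv,
      Real.norm_eq_abs]
    exact mul_le_mul_of_nonneg_left (inv_anti₀ hc h1) (abs_nonneg _)
  have hVp : Integrable (fun ω => V₁ ω / p ω) P := by
    refine Integrable.mono' (hV₁int.norm.mul_const c⁻¹)
      ((hVam.aemeasurable.div hpam.aemeasurable).aestronglyMeasurable) ?_
    filter_upwards [hpb] with ω hpω
    rw [Real.norm_eq_abs, abs_div, abs_of_pos (hc.trans hpω.1), div_eq_mul_inv,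
      Real.norm_eq_abs]
    exact mul_le_mul_of_nonneg_left (inv_anti₀ hc hpω.1.le) (abs_nonneg _)
  -- conditional expectation of the linearized weight is pβ
  have hgint : Integrable (fun ω => 2 * pβ ω - p ω) P := (hpβint.const_mul 2).sub hpint
  have hcondpβ : P[pβ|mβ] =ᵐ[P] pβ := condExp_of_aestronglyMeasurable' hmβΩ hpβsm hpβint
  have hge : P[fun ω => 2 * pβ ω - p ω|mβ] =ᵐ[P] pβ := by
    have hsub : P[fun ω => 2 * pβ ω - p ω|mβ]
        =ᵐ[P] P[fun ω => 2 * pβ ω|mβ] - P[p|mβ] :=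
      condExp_sub (hpβint.const_mul 2) hpint mβ
    have hsmul : P[fun ω => 2 * pβ ω|mβ] =ᵐ[P] fun ω => 2 * (P[pβ|mβ]) ω := by
      have := condExp_smul (μ := P) (m := mβ) (2 : ℝ) pβ
      simpa [Pi.smul_def, smul_eq_mul] using this
    filter_upwards [hsub, hsmul, hcondpβ, hpβ] with ω h1 h2 h3 h4
    simp only [Pi.sub_apply] at h1
    rw [h1, h2, h3, ← h4]; ring
  -- pull-out property
  have hpull : P[fun ω => V₁ ω / pβ ω ^ 2 * (2 * pβ ω - p ω)|mβ]
      =ᵐ[P] fun ω => V₁ ω / pβ ω ^ 2 * (P[fun ω => 2 * pβ ω - p ω|mβ]) ω :=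
    condExp_mul_of_aestronglyMeasurable_left hhm hhg hgint
  -- key identity: ∫ (V₁/pβ²)·(2pβ - p) = ∫ V₁ / pβ
  have key : ∫ ω, V₁ ω / pβ ω ^ 2 * (2 * pβ ω - p ω) ∂P = ∫ ω, V₁ ω / pβ ω ∂P := by
    rw [← integral_condExp hmβΩ (f := fun ω => V₁ ω / pβ ω ^ 2 * (2 * pβ ω - p ω))]
    refine integral_congr_ae ?_
    filter_upwards [hpull, hge, hpβlb] with ω h1 h2 h3
    have hpβpos : 0 < pβ ω := lt_of_lt_of_le hc h3
    rw [h1, h2]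
    field_simp
  rw [← key]
  -- pointwise inequality
  refine integral_mono_ae hhg hVp ?_
  filter_upwards [hpb, hpβlb, hV₁0] with ω hpω h1 h2
  have hppos : 0 < p ω := hc.trans hpω.1
  have hpβpos : 0 < pβ ω := lt_of_lt_of_le hc h1
  rw [div_mul_eq_mul_div, div_le_div_iff₀ (by positivity) hppos]
  nlinarith [mul_nonneg h2 (sq_nonneg (pβ ω - p ω))]
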